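/- Let $f = \sum_n P_n(z_2) z_1^n$ be a formal power series in $z_1 \in \mathbb{C}^k$, $z_2 \in \mathbb{C}^m$ whose coefficients $P_n$ are polynomials in $m$ variables satisfying $\deg P_n \le C_0 + C_1\|n\|$ for constants $C_0, C_1 > 0$, and suppose $f$ is a unit in the formal power series ring, i.e., its constant coefficient $P_0$ is a unit (equivalently $f(0,0) = P_0(0) \ne 0$ with $P_0$ a nonzero constant polynomial). Then the multiplicative inverse $f^{-1} = \sum_n Q_n(z_2) z_1^n$ in $(\mathbb{C}[z_2])[[z_1]]$ also satisfies a bound $\deg Q_n \le C_0' + C_1'\|n\|$ for some constants $C_0', C_1' > 0$. In particular the ring $R$ of such power series is a local subring of the formal power series ring. -/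

import Mathlib

open MvPolynomial in
lemma mv_isUnit_eq_C : ∀ {m : ℕ} (p : MvPolynomial (Fin m) ℂ), IsUnit p → ∃ c : ℂ, p = C c := by
  intro m
  induction m with
  | zero => intro p _; exact ⟨_, p.eq_C_of_isEmpty⟩
  | succ n ih =>
    intro p hp
    obtain ⟨r, hr, hrp⟩ := Polynomial.isUnit_iff.mp (hp.map (finSuccEquiv ℂ n))
    obtain ⟨c, hc⟩ := ih r hr
    refine ⟨c, ?_⟩
    have h2 : p = (finSuccEquiv ℂ n).symm (Polynomial.C r) := by
      rw [hrp, AlgEquiv.symm_apply_apply]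
    rw [h2, hc]
    have := congrFun (congrArg (fun f => f.toFun) (finSuccEquiv_comp_C_eq_C n (R := ℂ))) c
    simpa using this

open MvPolynomial in
lemma mv_isUnit_totalDegree {m : ℕ} (p : MvPolynomial (Fin m) ℂ) (hp : IsUnit p) :
    p.totalDegree = 0 := by
  obtain ⟨c, rfl⟩ := mv_isUnit_eq_C p hp
  exact totalDegree_C _

lemma weight_add {k : ℕ} (i j : Fin k →₀ ℕ) :
    ((i + j).sum fun _ e => e) = (i.sum fun _ e => e) + (j.sum fun _ e => e) :=
  Finsupp.sum_add_index' (fun _ => rfl) (fun _ _ _ => rfl)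

lemma weight_eq_zero {k : ℕ} {i : Fin k →₀ ℕ} (h : (i.sum fun _ e => e) = 0) : i = 0 := by
  ext a
  by_contra ha
  have hmem : a ∈ i.support := Finsupp.mem_support_iff.mpr (by simpa using ha)
  have := Finset.sum_eq_zero_iff.mp h a hmem
  simp at this
  exact ha (by simpa using this)


/-- If `f` lies in the ring `R` of formal power series with polynomial
coefficients `Pₙ` of degree at most `C₀ + C₁‖n‖`, and `f` is a unit of the formal power
series ring (its constant coefficient is a unit, i.e. a nonzero constant polynomial),
then its multiplicative inverse `g` (i.e. `f * g = 1`) also has polynomial coefficients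
`Qₙ` with `deg Qₙ ≤ C₀' + C₁'‖n‖` for some constants `C₀', C₁' > 0`.
In particular `R` is a local subring of the formal power series ring. -/
theorem inverse_degree_bound (k m : ℕ) (C0 C1 : ℝ) (hC0 : 0 < C0) (hC1 : 0 < C1)
    (f : MvPowerSeries (Fin k) (MvPolynomial (Fin m) ℂ))
    (hf : ∀ n : Fin k →₀ ℕ,
      ((MvPowerSeries.coeff n f).totalDegree : ℝ)
        ≤ C0 + C1 * ((n.sum fun _ e => e : ℕ) : ℝ))
    (hunit : IsUnit (MvPowerSeries.constantCoeff f))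
    (g : MvPowerSeries (Fin k) (MvPolynomial (Fin m) ℂ))
    (hg : f * g = 1) :
    ∃ C0' C1' : ℝ, 0 < C0' ∧ 0 < C1' ∧ ∀ n : Fin k →₀ ℕ,
      ((MvPowerSeries.coeff n g).totalDegree : ℝ)
        ≤ C0' + C1' * ((n.sum fun _ e => e : ℕ) : ℝ) := by
  classical
  set w : (Fin k →₀ ℕ) → ℕ := fun n => n.sum fun _ e => e with hw
  refine ⟨C0, C0 + C1, hC0, by linarith, ?_⟩
  have key : ∀ N : ℕ, ∀ n : Fin k →₀ ℕ, w n = N →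
      ((MvPowerSeries.coeff n g).totalDegree : ℝ) ≤ C0 + (C0 + C1) * (w n : ℝ) := by
    intro N
    induction N using Nat.strong_induction_on with
    | _ N ih =>
      intro n hn
      have hwn0 : (0:ℝ) ≤ (w n : ℝ) := Nat.cast_nonneg _
      by_cases h0 : n = 0
      · subst h0
        -- constant coefficient of g is a unit
        have hcc : MvPowerSeries.constantCoeff f *
            MvPowerSeries.constantCoeff g = 1 := by
          rw [← map_mul, hg, map_one]
        have hu : IsUnit (MvPowerSeries.constantCoeff g) :=
          IsUnit.of_mul_eq_one _ (by rw [mul_comm]; exact hcc)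
        have hdeg : (MvPowerSeries.coeff 0 g).totalDegree = 0 := by
          rw [MvPowerSeries.coeff_zero_eq_constantCoeff]
          exact mv_isUnit_totalDegree _ hu
        rw [hdeg]
        push_cast
        nlinarith
      · -- convolution identity
        have hco : (∑ p ∈ Finset.HasAntidiagonal.antidiagonal n,
            MvPowerSeries.coeff p.1 f * MvPowerSeries.coeff p.2 g) = 0 := by
          rw [← MvPowerSeries.coeff_mul, hg, MvPowerSeries.coeff_one, if_neg h0]
        have hmem : ((0 : Fin k →₀ ℕ), n) ∈ Finset.HasAntidiagonal.antidiagonal n := by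
          simp [Finset.HasAntidiagonal.mem_antidiagonal]
        rw [← Finset.add_sum_erase _ _ hmem] at hco
        set S : MvPolynomial (Fin m) ℂ := ∑ p ∈ (Finset.HasAntidiagonal.antidiagonal n).erase (0, n),
          MvPowerSeries.coeff p.1 f * MvPowerSeries.coeff p.2 g with hS
        obtain ⟨u, hu⟩ := hunit
        have hP0 : MvPowerSeries.coeff 0 f = (u : MvPolynomial (Fin m) ℂ) := by
          rw [MvPowerSeries.coeff_zero_eq_constantCoeff, ← hu]
        have hQn : MvPowerSeries.coeff n g = (↑u⁻¹ : MvPolynomial (Fin m) ℂ) * (-S) := by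
          have h1 : (u : MvPolynomial (Fin m) ℂ) * MvPowerSeries.coeff n g = -S := by
            rw [← hP0]
            linear_combination hco
          rw [← h1, ← mul_assoc, Units.inv_mul, one_mul]
        rw [hQn]
        -- degree bound
        have hmul : ((↑u⁻¹ : MvPolynomial (Fin m) ℂ) * (-S)).totalDegree ≤
            (↑u⁻¹ : MvPolynomial (Fin m) ℂ).totalDegree + (-S).totalDegree := MvPolynomial.totalDegree_mul _ _
        have hu0 : (↑u⁻¹ : MvPolynomial (Fin m) ℂ).totalDegree = 0 := mv_isUnit_totalDegree _ u⁻¹.isUnit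
        have hneg : (-S).totalDegree = S.totalDegree := MvPolynomial.totalDegree_neg _
        have hdeg : ((↑u⁻¹ : MvPolynomial (Fin m) ℂ) * (-S)).totalDegree ≤ S.totalDegree := by
          omega
        refine le_trans (by exact_mod_cast Nat.cast_le.mpr hdeg) ?_
        -- bound degree of S
        rcases Finset.eq_empty_or_nonempty ((Finset.HasAntidiagonal.antidiagonal n).erase (0, n)) with he | he
        · rw [hS, he, Finset.sum_empty]
          simp only [MvPolynomial.totalDegree_zero, Nat.cast_zero]
          nlinarith
        · obtain ⟨p, hp, hsup⟩ := Finset.exists_mem_eq_sup _ he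
            (fun p : (Fin k →₀ ℕ) × (Fin k →₀ ℕ) =>
              (MvPowerSeries.coeff p.1 f * MvPowerSeries.coeff p.2 g).totalDegree)
          have hSle : S.totalDegree ≤
              (MvPowerSeries.coeff p.1 f * MvPowerSeries.coeff p.2 g).totalDegree := by
            rw [hS, ← hsup]
            exact MvPolynomial.totalDegree_finset_sum _ _
          have hpadd : p.1 + p.2 = n := Finset.HasAntidiagonal.mem_antidiagonal.mp (Finset.mem_of_mem_erase hp)
          have hp1ne : p.1 ≠ 0 := by
            intro h1
            apply Finset.ne_of_mem_erase hp
            have : p.2 = n := by rw [← hpadd, h1, zero_add]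
            exact Prod.ext h1 this
          have hwp1 : 1 ≤ w p.1 := by
            rcases Nat.eq_zero_or_pos (w p.1) with h | h
            · exact absurd (weight_eq_zero h) hp1ne
            · exact h
          have hwadd : w p.1 + w p.2 = w n := by rw [← hpadd]; exact (weight_add p.1 p.2).symm
          have hwp2lt : w p.2 < N := by omega
          have hQ : ((MvPowerSeries.coeff p.2 g).totalDegree : ℝ)
              ≤ C0 + (C0 + C1) * (w p.2 : ℝ) := ih (w p.2) hwp2lt p.2 rfl
          have hP : ((MvPowerSeries.coeff p.1 f).totalDegree : ℝ)
              ≤ C0 + C1 * (w p.1 : ℝ) := hf p.1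
          have hPQ : ((MvPowerSeries.coeff p.1 f * MvPowerSeries.coeff p.2 g).totalDegree : ℝ)
              ≤ ((MvPowerSeries.coeff p.1 f).totalDegree : ℝ)
                + ((MvPowerSeries.coeff p.2 g).totalDegree : ℝ) := by
            exact_mod_cast MvPolynomial.totalDegree_mul _ _
          have hSleR : (S.totalDegree : ℝ)
              ≤ ((MvPowerSeries.coeff p.1 f * MvPowerSeries.coeff p.2 g).totalDegree : ℝ) :=
            Nat.cast_le.mpr hSle
          have hw1 : (1:ℝ) ≤ (w p.1 : ℝ) := by exact_mod_cast hwp1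
          have hwaddR : (w p.1 : ℝ) + (w p.2 : ℝ) = (w n : ℝ) := by exact_mod_cast hwadd
          have hwp2nn : (0:ℝ) ≤ (w p.2 : ℝ) := Nat.cast_nonneg _
          nlinarith
  intro n
  have := key (w n) n rfl
  calc ((MvPowerSeries.coeff n g).totalDegree : ℝ)
      ≤ C0 + (C0 + C1) * (w n : ℝ) := this
    _ = C0 + (C0 + C1) * ((n.sum fun _ e => e : ℕ) : ℝ) := rfl
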